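/- (Off-policy integral identity for the linear system, equation (5.7).) Let P_i and P⁺ be symmetric n×n real matrices, define the closed-loop matrix Ā_i = A + γ⁻²·B₁·B₁ᵀ·P_i − B₂·R⁻¹·B₂ᵀ·P_i and Q̄_i = Q − γ⁻²·P_i·B₁·B₁ᵀ·P_i + P_i·B₂·R⁻¹·B₂ᵀ·P_i, and suppose P⁺ satisfies the Lyapunov equation Ā_iᵀ·P⁺ + P⁺·Ā_i + Q̄_i = 0. Let u : ℝ → ℝᵐ and w : ℝ → ℝ^q be continuous, let t ∈ ℝ and Δt > 0, and let x : ℝ → ℝⁿ be differentiable on [t, t+Δt] with x'(τ) = A·x(τ) + B₂·u(τ) + B₁·w(τ) for all τ ∈ [t, t+Δt]. Then 2·∫ₜ^{t+Δt} ⟨P⁺·x(τ), B₂·(u(τ) + R⁻¹·B₂ᵀ·P_i·x(τ))⟩ dτ + 2·∫ₜ^{t+Δt} ⟨P⁺·x(τ), B₁·(w(τ) − γ⁻²·B₁ᵀ·P_i·x(τ))⟩ dτ + ⟨x(t), P⁺·x(t)⟩ − ⟨x(t+Δt), P⁺·x(t+Δt)⟩ = ∫ₜ^{t+Δt} ⟨x(τ),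 Q̄_i·x(τ)⟩ dτ. -/

import Mathlib

open Matrix MeasureTheory

/-- Matrix–vector multiplication, valued in Euclidean space. -/
noncomputable def mv {a b : ℕ} (M : Matrix (Fin a) (Fin b) ℝ)
    (v : EuclideanSpace ℝ (Fin b)) : EuclideanSpace ℝ (Fin a) :=
  WithLp.toLp 2 (M.mulVec v)

open scoped RealInnerProductSpace

/-!
Along the trajectory, `V = ⟪x, P⁺x⟫` has derivative `2⟪P⁺x, x'⟫`. Rewriting the dynamics in
closed-loop form `x' = Āᵢx + B₂(u + R⁻¹B₂ᵀPᵢx) + B₁(w - γ⁻²B₁ᵀPᵢx)`, the Lyapunov equation turns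
`2⟪P⁺x, Āᵢx⟫` into `-⟪x, Q̄ᵢx⟫`, and the fundamental theorem of calculus on `[t, t + Δt]` gives
the identity.
-/

section
variable {a b c : ℕ}

@[fun_prop]
lemma continuous_mv (M : Matrix (Fin a) (Fin b) ℝ) : Continuous (mv M) :=
  (LinearMap.toContinuousLinearMap (toEuclideanLin M)).continuous

lemma HasDerivAt.const_mv (M : Matrix (Fin a) (Fin b) ℝ) {x : ℝ → EuclideanSpace ℝ (Fin b)}
    {x' : EuclideanSpace ℝ (Fin b)} {τ : ℝ} (hx : HasDerivAt x x' τ) :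
    HasDerivAt (fun s => mv M (x s)) (mv M x') τ :=
  (LinearMap.toContinuousLinearMap (toEuclideanLin M)).hasFDerivAt.comp_hasDerivAt τ hx

lemma mv_mv (M : Matrix (Fin a) (Fin b) ℝ) (N : Matrix (Fin b) (Fin c) ℝ)
    (v : EuclideanSpace ℝ (Fin c)) : mv M (mv N v) = mv (M * N) v := by
  simp [mv, mulVec_mulVec]

lemma add_mv (M N : Matrix (Fin a) (Fin b) ℝ) (v : EuclideanSpace ℝ (Fin b)) :
    mv (M + N) v = mv M v + mv N v := by
  simp [mv, add_mulVec]

lemma inner_mv_left (M : Matrix (Fin a) (Fin b) ℝ) (v : EuclideanSpace ℝ (Fin b))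
    (w : EuclideanSpace ℝ (Fin a)) : ⟪mv M v, w⟫ = ⟪v, mv Mᵀ w⟫ := by
  simp only [mv, EuclideanSpace.inner_eq_star_dotProduct, star_trivial]
  rw [mulVec_transpose, ← dotProduct_mulVec, dotProduct_comm]

lemma inner_mv_right (M : Matrix (Fin a) (Fin b) ℝ) (v : EuclideanSpace ℝ (Fin a))
    (w : EuclideanSpace ℝ (Fin b)) : ⟪v, mv M w⟫ = ⟪mv Mᵀ v, w⟫ := by
  rw [inner_mv_left, transpose_transpose]

lemma mv_add_mv_add_mv_eq_closed_loop (A : Matrix (Fin a) (Fin a) ℝ)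
    (B₁ : Matrix (Fin a) (Fin b) ℝ) (B₂ : Matrix (Fin a) (Fin c) ℝ) (F : Matrix (Fin b) (Fin a) ℝ)
    (K : Matrix (Fin c) (Fin a) ℝ) (r : ℝ) (v : EuclideanSpace ℝ (Fin a))
    (u : EuclideanSpace ℝ (Fin c)) (w : EuclideanSpace ℝ (Fin b)) :
    mv A v + mv B₂ u + mv B₁ w
      = mv (A + r • (B₁ * F) - B₂ * K) v + mv B₂ (u + mv K v) + mv B₁ (w - r • mv F v) := by
  apply WithLp.ofLp_injective
  simp only [mv, WithLp.ofLp_add, WithLp.ofLp_sub, WithLp.ofLp_smul,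
    add_mulVec, sub_mulVec, smul_mulVec, mulVec_add, mulVec_sub, mulVec_smul, mulVec_mulVec]
  abel

lemma inner_mv_transpose_mul_add_mul {P Abar : Matrix (Fin a) (Fin a) ℝ} (hP : P.IsSymm)
    (v : EuclideanSpace ℝ (Fin a)) :
    ⟪v, mv (Abarᵀ * P + P * Abar) v⟫ = 2 * ⟪mv P v, mv Abar v⟫ := by
  have h₁ : ⟪v, mv (Abarᵀ * P) v⟫ = ⟪mv P v, mv Abar v⟫ := by
    rw [← mv_mv, ← inner_mv_left, real_inner_comm]
  have h₂ : ⟪v, mv (P * Abar) v⟫ = ⟪mv P v, mv Abar v⟫ := by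
    rw [← mv_mv, inner_mv_right, hP.eq]
  rw [add_mv, inner_add_right, h₁, h₂, two_mul]

lemma HasDerivAt.inner_mv_self {P : Matrix (Fin a) (Fin a) ℝ} (hP : P.IsSymm)
    {x : ℝ → EuclideanSpace ℝ (Fin a)} {x' : EuclideanSpace ℝ (Fin a)} {τ : ℝ}
    (hx : HasDerivAt x x' τ) :
    HasDerivAt (fun s => ⟪x s, mv P (x s)⟫) (2 * ⟪mv P (x τ), x'⟫) τ := by
  refine (hx.inner ℝ (hx.const_mv P)).congr_deriv ?_
  rw [inner_mv_right, hP.eq, real_inner_comm x']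
  ring

theorem integral_inner_mv_lyapunov {Abar P Qbar : Matrix (Fin a) (Fin a) ℝ} (hP : P.IsSymm)
    (hLyap : Abarᵀ * P + P * Abar + Qbar = 0) {x e : ℝ → EuclideanSpace ℝ (Fin a)} {s t : ℝ}
    (hst : s ≤ t) (he : ContinuousOn e (Set.Icc s t))
    (hx : ∀ τ ∈ Set.Icc s t, HasDerivAt x (mv Abar (x τ) + e τ) τ) :
    2 * (∫ τ in s..t, ⟪mv P (x τ), e τ⟫) + ⟪x s, mv P (x s)⟫ - ⟪x t, mv P (x t)⟫
      = ∫ τ in s..t, ⟪x τ, mv Qbar (x τ)⟫ := by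
  have hxc : ContinuousOn x (Set.Icc s t) := fun τ hτ =>
    (hx τ hτ).continuousAt.continuousWithinAt
  have hQ : ∀ v, ⟪v, mv Qbar v⟫ = -(2 * ⟪mv P v, mv Abar v⟫) := by
    intro v
    have h0 : ⟪v, mv (Abarᵀ * P + P * Abar + Qbar) v⟫ = 0 := by simp [hLyap, mv]
    rw [add_mv, inner_add_right, inner_mv_transpose_mul_add_mul hP] at h0
    linarith
  have hV : ∀ τ ∈ Set.uIcc s t, HasDerivAt (fun τ => ⟪x τ, mv P (x τ)⟫)
      (2 * ⟪mv P (x τ), e τ⟫ - ⟪x τ, mv Qbar (x τ)⟫) τ := by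
    rw [Set.uIcc_of_le hst]
    intro τ hτ
    convert (hx τ hτ).inner_mv_self hP using 1
    rw [inner_add_right, hQ]
    ring
  have hf : IntervalIntegrable (fun τ => ⟪mv P (x τ), e τ⟫) volume s t := by
    apply ContinuousOn.intervalIntegrable
    rw [Set.uIcc_of_le hst]
    fun_prop
  have hg : IntervalIntegrable (fun τ => ⟪x τ, mv Qbar (x τ)⟫) volume s t := by
    apply ContinuousOn.intervalIntegrable
    rw [Set.uIcc_of_le hst]
    fun_prop
  have hFTC := intervalIntegral.integral_eq_sub_of_hasDerivAt hV ((hf.const_mul 2).sub hg)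
  rw [intervalIntegral.integral_sub (hf.const_mul 2) hg, intervalIntegral.integral_const_mul]
    at hFTC
  linarith
end

theorem linear_off_policy_identity_general {n m q p : ℕ}
    (A : Matrix (Fin n) (Fin n) ℝ)
    (B₁ : Matrix (Fin n) (Fin q) ℝ)
    (B₂ : Matrix (Fin n) (Fin m) ℝ)
    (C : Matrix (Fin p) (Fin n) ℝ)
    (R : Matrix (Fin m) (Fin m) ℝ)
    (γ : ℝ)
    (Pi Pplus : Matrix (Fin n) (Fin n) ℝ) (hPplus : Pplus.IsSymm)
    (hLyap : (A + (γ^2)⁻¹ • (B₁ * B₁ᵀ * Pi) - B₂ * R⁻¹ * B₂ᵀ * Pi)ᵀ * Pplus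
        + Pplus * (A + (γ^2)⁻¹ • (B₁ * B₁ᵀ * Pi) - B₂ * R⁻¹ * B₂ᵀ * Pi)
        + (Cᵀ * C - (γ^2)⁻¹ • (Pi * B₁ * B₁ᵀ * Pi) + Pi * B₂ * R⁻¹ * B₂ᵀ * Pi) = 0)
    (u : ℝ → EuclideanSpace ℝ (Fin m)) (hu : Continuous u)
    (w : ℝ → EuclideanSpace ℝ (Fin q)) (hw : Continuous w)
    (t Δt : ℝ) (hΔt : 0 < Δt)
    (x : ℝ → EuclideanSpace ℝ (Fin n))
    (hx : ∀ τ ∈ Set.Icc t (t + Δt),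
      HasDerivAt x (mv A (x τ) + mv B₂ (u τ) + mv B₁ (w τ)) τ) :
    2 * (∫ τ in t..(t + Δt),
          (inner ℝ (mv Pplus (x τ)) (mv B₂ (u τ + mv R⁻¹ (mv B₂ᵀ (mv Pi (x τ))))) : ℝ))
      + 2 * (∫ τ in t..(t + Δt),
          (inner ℝ (mv Pplus (x τ)) (mv B₁ (w τ - (γ^2)⁻¹ • mv B₁ᵀ (mv Pi (x τ)))) : ℝ))
      + (inner ℝ (x t) (mv Pplus (x t)) : ℝ)
      - (inner ℝ (x (t + Δt)) (mv Pplus (x (t + Δt))) : ℝ)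
      = ∫ τ in t..(t + Δt),
          (inner ℝ (x τ)
            (mv (Cᵀ * C - (γ^2)⁻¹ • (Pi * B₁ * B₁ᵀ * Pi) + Pi * B₂ * R⁻¹ * B₂ᵀ * Pi)
              (x τ)) : ℝ) := by
  have hle : t ≤ t + Δt := by linarith
  set e : ℝ → EuclideanSpace ℝ (Fin n) := fun τ =>
    mv B₂ (u τ + mv R⁻¹ (mv B₂ᵀ (mv Pi (x τ))))
      + mv B₁ (w τ - (γ^2)⁻¹ • mv B₁ᵀ (mv Pi (x τ)))
  have hxc : ContinuousOn x (Set.Icc t (t + Δt)) := fun τ hτ =>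
    (hx τ hτ).continuousAt.continuousWithinAt
  have hx' : ∀ τ ∈ Set.Icc t (t + Δt), HasDerivAt x
      (mv (A + (γ^2)⁻¹ • (B₁ * B₁ᵀ * Pi) - B₂ * R⁻¹ * B₂ᵀ * Pi) (x τ) + e τ) τ := by
    intro τ hτ
    convert hx τ hτ using 1
    rw [mv_add_mv_add_mv_eq_closed_loop A B₁ B₂ (B₁ᵀ * Pi) (R⁻¹ * B₂ᵀ * Pi) (γ^2)⁻¹,
      ← mv_mv, ← mv_mv, ← mv_mv]
    simp only [e, Matrix.mul_assoc, add_assoc]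
  have hIcc := Set.uIcc_of_le hle
  have h₂ : IntervalIntegrable (fun τ => ⟪mv Pplus (x τ),
      mv B₂ (u τ + mv R⁻¹ (mv B₂ᵀ (mv Pi (x τ))))⟫) volume t (t + Δt) :=
    ContinuousOn.intervalIntegrable (by rw [hIcc]; fun_prop)
  have h₁ : IntervalIntegrable (fun τ => ⟪mv Pplus (x τ),
      mv B₁ (w τ - (γ^2)⁻¹ • mv B₁ᵀ (mv Pi (x τ)))⟫) volume t (t + Δt) :=
    ContinuousOn.intervalIntegrable (by rw [hIcc]; fun_prop)
  rw [← integral_inner_mv_lyapunov hPplus hLyap hle (by fun_prop) hx']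
  simp only [e, inner_add_right]
  rw [intervalIntegral.integral_add h₂ h₁]
  ring

/-- **Off-policy integral identity for the linear system (equation (5.7)).**  If `P⁺`
solves the Lyapunov equation `ĀᵢᵀP⁺ + P⁺Āᵢ + Q̄ᵢ = 0`, then along any trajectory of
`x' = A x + B₂ u + B₁ w` on `[t, t+Δt]`,
`2∫ ⟨P⁺x, B₂(u + R⁻¹B₂ᵀPᵢx)⟩ + 2∫ ⟨P⁺x, B₁(w - γ⁻²B₁ᵀPᵢx)⟩
  + ⟨x(t), P⁺x(t)⟩ - ⟨x(t+Δt), P⁺x(t+Δt)⟩ = ∫ ⟨x, Q̄ᵢx⟩`. -/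
theorem linear_off_policy_identity {n m q p : ℕ}
    (A : Matrix (Fin n) (Fin n) ℝ)
    (B₁ : Matrix (Fin n) (Fin q) ℝ)
    (B₂ : Matrix (Fin n) (Fin m) ℝ)
    (C : Matrix (Fin p) (Fin n) ℝ)
    (R : Matrix (Fin m) (Fin m) ℝ) (hR : R.PosDef)
    (γ : ℝ) (hγ : 0 < γ)
    (Pi Pplus : Matrix (Fin n) (Fin n) ℝ) (hPi : Pi.IsSymm) (hPplus : Pplus.IsSymm)
    (hLyap : (A + (γ^2)⁻¹ • (B₁ * B₁ᵀ * Pi) - B₂ * R⁻¹ * B₂ᵀ * Pi)ᵀ * Pplus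
        + Pplus * (A + (γ^2)⁻¹ • (B₁ * B₁ᵀ * Pi) - B₂ * R⁻¹ * B₂ᵀ * Pi)
        + (Cᵀ * C - (γ^2)⁻¹ • (Pi * B₁ * B₁ᵀ * Pi) + Pi * B₂ * R⁻¹ * B₂ᵀ * Pi) = 0)
    (u : ℝ → EuclideanSpace ℝ (Fin m)) (hu : Continuous u)
    (w : ℝ → EuclideanSpace ℝ (Fin q)) (hw : Continuous w)
    (t Δt : ℝ) (hΔt : 0 < Δt)
    (x : ℝ → EuclideanSpace ℝ (Fin n))
    (hx : ∀ τ ∈ Set.Icc t (t + Δt),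
      HasDerivAt x (mv A (x τ) + mv B₂ (u τ) + mv B₁ (w τ)) τ) :
    2 * (∫ τ in t..(t + Δt),
          (inner ℝ (mv Pplus (x τ)) (mv B₂ (u τ + mv R⁻¹ (mv B₂ᵀ (mv Pi (x τ))))) : ℝ))
      + 2 * (∫ τ in t..(t + Δt),
          (inner ℝ (mv Pplus (x τ)) (mv B₁ (w τ - (γ^2)⁻¹ • mv B₁ᵀ (mv Pi (x τ)))) : ℝ))
      + (inner ℝ (x t) (mv Pplus (x t)) : ℝ)
      - (inner ℝ (x (t + Δt)) (mv Pplus (x (t + Δt))) : ℝ)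
      = ∫ τ in t..(t + Δt),
          (inner ℝ (x τ)
            (mv (Cᵀ * C - (γ^2)⁻¹ • (Pi * B₁ * B₁ᵀ * Pi) + Pi * B₂ * R⁻¹ * B₂ᵀ * Pi)
              (x τ)) : ℝ) :=
  linear_off_policy_identity_general A B₁ B₂ C R γ Pi Pplus hPplus hLyap u hu w hw t Δt hΔt x hx
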